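/- The effective Hamiltonian H̄ defined above is even, nondecreasing in |p|, and satisfies H̄(p) ≥ p²/2 − 1 and H̄(p) ≤ p²/2 for all p with |p| ≥ 2√2/π. -/

import Mathlib

/-!
For `λ ≥ 0` put `M(λ) = (√2/2π) ∫₀^{2π} √(cos²(κ₀x/2) + λ) dx` (`meanMomentum κ₀ λ`), so that
`|p| = M(H̄ p)` above the threshold. Since `0 ≤ cos² ≤ 1`, averaging gives
`√(2λ) ≤ M(λ) ≤ √(2(1 + λ))`, which squares to `p²/2 - 1 ≤ H̄ p ≤ p²/2`. The integrand is strictly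
increasing in `λ`, hence so is `M`, so `H̄ p` is a nondecreasing function of `|p|` (and
`H̄ = 0 ≤ H̄ q` below the threshold); evenness is the case `|-p| = |p|`.
-/

open Real Set

section SqrtIntegral

variable {g : ℝ → ℝ} {a b : ℝ}

theorem mul_sqrt_le_integral_sqrt_add (hab : a ≤ b) (hgc : ContinuousOn g (Icc a b))
    (hg₀ : ∀ x ∈ Icc a b, 0 ≤ g x) (c : ℝ) :
    (b - a) * √c ≤ ∫ x in a..b, √(g x + c) := by
  have h : ∫ _ in a..b, √c ≤ ∫ x in a..b, √(g x + c) :=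
    intervalIntegral.integral_mono_on hab intervalIntegrable_const
      ((hgc.add continuousOn_const).sqrt.intervalIntegrable_of_Icc hab)
      fun x hx => Real.sqrt_le_sqrt (by linarith [hg₀ x hx])
  simpa only [intervalIntegral.integral_const, smul_eq_mul] using h

theorem integral_sqrt_add_le_mul_sqrt (hab : a ≤ b) (hgc : ContinuousOn g (Icc a b))
    (hg₁ : ∀ x ∈ Icc a b, g x ≤ 1) (c : ℝ) :
    ∫ x in a..b, √(g x + c) ≤ (b - a) * √(1 + c) := by
  have h : ∫ x in a..b, √(g x + c) ≤ ∫ _ in a..b, √(1 + c) :=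
    intervalIntegral.integral_mono_on hab
      ((hgc.add continuousOn_const).sqrt.intervalIntegrable_of_Icc hab) intervalIntegrable_const
      fun x hx => Real.sqrt_le_sqrt (by linarith [hg₁ x hx])
  simpa only [intervalIntegral.integral_const, smul_eq_mul] using h

theorem strictMonoOn_integral_sqrt_add (hab : a < b) (hgc : ContinuousOn g (Icc a b))
    (hg₀ : ∀ x ∈ Icc a b, 0 ≤ g x) :
    StrictMonoOn (fun c => ∫ x in a..b, √(g x + c)) (Ici 0) := by
  intro c₁ hc₁ c₂ _ hc
  have hlt : ∀ x ∈ Icc a b, √(g x + c₁) < √(g x + c₂) := fun x hx =>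
    Real.sqrt_lt_sqrt (add_nonneg (hg₀ x hx) hc₁) (by linarith)
  exact intervalIntegral.integral_lt_integral_of_continuousOn_of_le_of_exists_lt hab
    (hgc.add continuousOn_const).sqrt (hgc.add continuousOn_const).sqrt
    (fun x hx => (hlt x (Ioc_subset_Icc_self hx)).le)
    ⟨a, left_mem_Icc.2 hab.le, hlt a (left_mem_Icc.2 hab.le)⟩

end SqrtIntegral

noncomputable def meanMomentum (κ₀ : ℕ) (l : ℝ) : ℝ :=
  (√2 / (2 * π)) * ∫ x in (0 : ℝ)..(2 * π), √(cos (κ₀ * x / 2) ^ 2 + l)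

section MeanMomentum

variable (κ₀ : ℕ)

private theorem continuousOn_cos_sq (s : Set ℝ) :
    ContinuousOn (fun x : ℝ => cos (κ₀ * x / 2) ^ 2) s := by
  fun_prop

private theorem meanMomentum_coeff_pos : 0 < √2 / (2 * π) := by
  have := pi_pos
  positivity

theorem meanMomentum_strictMonoOn : StrictMonoOn (meanMomentum κ₀) (Ici 0) := fun _ h₁ _ h₂ h =>
  mul_lt_mul_of_pos_left
    (strictMonoOn_integral_sqrt_add two_pi_pos (continuousOn_cos_sq κ₀ _)
      (fun _ _ => sq_nonneg _) h₁ h₂ h)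
    meanMomentum_coeff_pos

theorem sqrt_two_mul_le_meanMomentum (l : ℝ) : √(2 * l) ≤ meanMomentum κ₀ l := by
  have h := mul_sqrt_le_integral_sqrt_add two_pi_pos.le (continuousOn_cos_sq κ₀ _)
    (fun _ _ => sq_nonneg _) l
  calc √(2 * l) = (√2 / (2 * π)) * ((2 * π - 0) * √l) := by
        rw [sub_zero, Real.sqrt_mul zero_le_two]; field_simp
    _ ≤ meanMomentum κ₀ l := mul_le_mul_of_nonneg_left h meanMomentum_coeff_pos.le

theorem meanMomentum_le_sqrt_two_mul (l : ℝ) : meanMomentum κ₀ l ≤ √(2 * (1 + l)) := by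
  have h := integral_sqrt_add_le_mul_sqrt two_pi_pos.le (continuousOn_cos_sq κ₀ _)
    (fun _ _ => cos_sq_le_one _) l
  calc meanMomentum κ₀ l ≤ (√2 / (2 * π)) * ((2 * π - 0) * √(1 + l)) :=
        mul_le_mul_of_nonneg_left h meanMomentum_coeff_pos.le
    _ = √(2 * (1 + l)) := by rw [sub_zero, Real.sqrt_mul zero_le_two]; field_simp

end MeanMomentum

theorem stmt13_general (κ₀ : ℕ) (Hbar : ℝ → ℝ)
    (hsmall : ∀ p : ℝ, |p| ≤ 2 * Real.sqrt 2 / π → Hbar p = 0)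
    (hbig : ∀ p : ℝ, 2 * Real.sqrt 2 / π ≤ |p| →
      0 ≤ Hbar p ∧
      |p| = (Real.sqrt 2 / (2 * π)) * ∫ x in (0)..(2 * π),
          Real.sqrt (Real.cos (κ₀ * x / 2) ^ 2 + Hbar p)) :
    (∀ p : ℝ, Hbar (-p) = Hbar p) ∧
    (∀ p q : ℝ, |p| ≤ |q| → Hbar p ≤ Hbar q) ∧
    (∀ p : ℝ, 2 * Real.sqrt 2 / π ≤ |p| →
      p ^ 2 / 2 - 1 ≤ Hbar p ∧ Hbar p ≤ p ^ 2 / 2) := by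
  replace hbig : ∀ p : ℝ, 2 * √2 / π ≤ |p| → 0 ≤ Hbar p ∧ |p| = meanMomentum κ₀ (Hbar p) := hbig
  have mono : ∀ p q : ℝ, |p| ≤ |q| → Hbar p ≤ Hbar q := by
    intro p q hpq
    rcases le_total |p| (2 * √2 / π) with hp | hp
    · rw [hsmall p hp]
      rcases le_total |q| (2 * √2 / π) with hq | hq
      · rw [hsmall q hq]
      · exact (hbig q hq).1
    · obtain ⟨hp₀, hpM⟩ := hbig p hp
      obtain ⟨hq₀, hqM⟩ := hbig q (hp.trans hpq)
      rw [hpM, hqM] at hpq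
      exact ((meanMomentum_strictMonoOn κ₀).le_iff_le hp₀ hq₀).1 hpq
  refine ⟨fun p => le_antisymm (mono _ _ (abs_neg p).le) (mono _ _ (abs_neg p).ge), mono,
    fun p hp => ?_⟩
  obtain ⟨hp₀, hpM⟩ := hbig p hp
  have hlow := (Real.le_sqrt (abs_nonneg p) (by linarith)).1
    (hpM.trans_le (meanMomentum_le_sqrt_two_mul κ₀ (Hbar p)))
  have hupp := (Real.sqrt_le_iff.1 ((sqrt_two_mul_le_meanMomentum κ₀ _).trans_eq hpM.symm)).2
  rw [sq_abs] at hlow hupp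
  constructor <;> linarith

/-- The effective Hamiltonian `H̄` is even, nondecreasing in `|p|`, and satisfies
`p²/2 − 1 ≤ H̄(p) ≤ p²/2` whenever `|p| ≥ 2√2/π`. -/
theorem stmt13 (κ₀ : ℕ) (hκ : 0 < κ₀) (Hbar : ℝ → ℝ)
    (hcont : Continuous Hbar)
    (hsmall : ∀ p : ℝ, |p| ≤ 2 * Real.sqrt 2 / π → Hbar p = 0)
    (hbig : ∀ p : ℝ, 2 * Real.sqrt 2 / π ≤ |p| →
      0 ≤ Hbar p ∧
      |p| = (Real.sqrt 2 / (2 * π)) * ∫ x in (0)..(2 * π),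
          Real.sqrt (Real.cos (κ₀ * x / 2) ^ 2 + Hbar p)) :
    (∀ p : ℝ, Hbar (-p) = Hbar p) ∧
    (∀ p q : ℝ, |p| ≤ |q| → Hbar p ≤ Hbar q) ∧
    (∀ p : ℝ, 2 * Real.sqrt 2 / π ≤ |p| →
      p ^ 2 / 2 - 1 ≤ Hbar p ∧ Hbar p ≤ p ^ 2 / 2) :=
  stmt13_general κ₀ Hbar hsmall hbig
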